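/- arXiv:1311.2492 — 4 statements merged into one kernel-verified Lean document; each statement's English description precedes it below -/
import Mathlib

section
/- Let G = (V,W) be a weighted graph with |V| = m and Laplacian L = D - W, with eigenvalues (listed in increasing order, with multiplicity) 0 = λ_1 < λ_2 ≤ λ_3 ≤ ... ≤ λ_m (so the underlying graph is connected). Let n be such that n + 1 ≤ m. Then the minimum of the energy E(R) = tr(Rᵀ L R) over all balanced orthogonal drawings R (m×n real matrices with Rᵀ R = I_n and 1ᵀ R = 0) exists and equals λ_2 + λ_3 + ... + λ_{n+1}; moreover, the m×n matrix R whose columns are any orthonormal eigenvectors u_2,...,u_{n+1} of L associated with λ_2 ≤ ... ≤ λ_{n+1} is a balanced orthogonal drawing achieving this minimum. -/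
/-!
Write `L = U Λ Uᵀ` with `U` the orthogonal matrix whose columns are the eigenvectors `uᵢ`.
For a drawing `R` with `Rᵀ R = 1` put `A = Uᵀ R`; then `tr(Rᵀ L R) = ∑ᵢ λᵢ pᵢ`, where
`pᵢ = (A Aᵀ)ᵢᵢ` are the diagonal entries of a rank-`n` orthogonal projection, so `0 ≤ pᵢ ≤ 1`
and `∑ᵢ pᵢ = n`. Since `λᵢ ≠ 0` for `i ≠ 0` and `L 1 = 0`, the all-ones vector is a multiple
of `u₀`, so balance forces `p₀ = 0`; the bathtub principle then bounds `∑ᵢ λᵢ pᵢ` below by the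
`n` smallest remaining eigenvalues. The drawing by `u₁, …, uₙ` has energy exactly their sum.
-/

open Matrix

section
open Finset

theorem Finset.sum_le_sum_mul_of_le_of_le {ι : Type*} [Fintype ι] [DecidableEq ι]
    (S : Finset ι) (lam p : ι → ℝ) (c : ℝ) (hp₀ : ∀ i, 0 ≤ p i)
    (hp₁ : ∀ i, p i ≤ 1)
    (hsum : ∑ i, p i = #S) (hS : ∀ i ∈ S, lam i ≤ c)
    (hSc : ∀ i ∉ S, p i ≠ 0 → c ≤ lam i) :
    ∑ i ∈ S, lam i ≤ ∑ i, lam i * p i := by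
  have hin : 0 ≤ ∑ i ∈ S, (lam i - c) * (p i - 1) :=
    sum_nonneg fun i hi =>
      mul_nonneg_of_nonpos_of_nonpos (by linarith [hS i hi]) (by linarith [hp₁ i])
  have hout : 0 ≤ ∑ i ∈ Sᶜ, (lam i - c) * p i := by
    refine sum_nonneg fun i hi => ?_
    rcases eq_or_ne (p i) 0 with h | h
    · simp [h]
    · exact mul_nonneg (by linarith [hSc i (mem_compl.1 hi) h]) (hp₀ i)
  have hcsum : c * ∑ i ∈ S, p i + c * ∑ i ∈ Sᶜ, p i = c * #S := by
    rw [← mul_add, sum_add_sum_compl, hsum]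
  rw [← sum_add_sum_compl S]
  simp only [mul_sub, sub_mul, sum_sub_distrib, ← mul_sum, sum_const, nsmul_eq_mul, mul_one]
    at hin hout
  linarith

namespace Matrix

section Projection

variable {ι κ : Type*} [Fintype κ]

theorem mul_transpose_self_apply_self_nonneg (A : Matrix ι κ ℝ) (i : ι) :
    0 ≤ (A * Aᵀ) i i :=
  sum_nonneg fun _ _ => mul_self_nonneg _

theorem mul_transpose_self_apply_self_le_one [Fintype ι] [DecidableEq κ] {A : Matrix ι κ ℝ}
    (hA : Aᵀ * A = 1) (i : ι) : (A * Aᵀ) i i ≤ 1 := by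
  set P := A * Aᵀ
  have hP : P * P = P := by
    simp only [P, Matrix.mul_assoc, ← Matrix.mul_assoc Aᵀ, hA, Matrix.one_mul]
  have hPsymm : ∀ k, P k i = P i k := fun k => by
    simp only [P, mul_apply, transpose_apply, mul_comm]
  have hsq : (P i i) ^ 2 ≤ P i i := calc
    (P i i) ^ 2 ≤ ∑ k, (P i k) ^ 2 :=
      single_le_sum (f := fun k => (P i k) ^ 2) (fun _ _ => sq_nonneg _) (mem_univ i)
    _ = P i i := by
      conv_rhs => rw [← hP]
      simp only [mul_apply, sq, hPsymm]
  nlinarith [mul_transpose_self_apply_self_nonneg A i]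

theorem trace_mul_transpose_self [Fintype ι] [DecidableEq κ] {A : Matrix ι κ ℝ}
    (hA : Aᵀ * A = 1) : (A * Aᵀ).trace = Fintype.card κ := by
  rw [trace_mul_comm, hA, trace_one]

end Projection

section Eigenbasis

variable {ι κ R : Type*} [Fintype ι] [DecidableEq ι] [CommRing R]
  {L U : Matrix ι ι R} {lam : ι → R}

theorem diagonal_sum_sub_mulVec_one (M : Matrix ι ι R) :
    (diagonal (fun i => ∑ j, M i j) - M) *ᵥ (fun _ => 1) = 0 := by
  ext i
  simp [mulVec, dotProduct, diagonal_apply]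

theorem eq_mul_diagonal_mul_transpose (hU : Uᵀ * U = 1) (hLU : L * U = U * diagonal lam) :
    L = U * diagonal lam * Uᵀ := by
  rw [← hLU, Matrix.mul_assoc, mul_eq_one_comm.1 hU, Matrix.mul_one]

theorem trace_transpose_mul_mul_eq_sum [Fintype κ] (hU : Uᵀ * U = 1)
    (hLU : L * U = U * diagonal lam) (X : Matrix ι κ R) :
    (Xᵀ * L * X).trace = ∑ i, lam i * ((Uᵀ * X) * (Uᵀ * X)ᵀ) i i := by
  have hX : Xᵀ * L * X = (Uᵀ * X)ᵀ * (diagonal lam * (Uᵀ * X)) := by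
    simp only [eq_mul_diagonal_mul_transpose hU hLU, transpose_mul, transpose_transpose,
      Matrix.mul_assoc]
  rw [hX, trace_mul_comm, Matrix.mul_assoc, trace]
  simp [diagonal_mul]

theorem transpose_mulVec_apply_eq_zero [NoZeroDivisors R] (hU : Uᵀ * U = 1)
    (hLU : L * U = U * diagonal lam) {v : ι → R} (hv : L *ᵥ v = 0) {k : ι}
    (hk : lam k ≠ 0) : (Uᵀ *ᵥ v) k = 0 := by
  have hUL : Uᵀ * L = diagonal lam * Uᵀ := by
    rw [eq_mul_diagonal_mul_transpose hU hLU, ← Matrix.mul_assoc, ← Matrix.mul_assoc, hU,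
      Matrix.one_mul]
  have h : diagonal lam *ᵥ (Uᵀ *ᵥ v) = 0 := by
    rw [mulVec_mulVec, ← hUL, ← mulVec_mulVec, hv, mulVec_zero]
  have hk' := congrFun h k
  rw [mulVec_diagonal] at hk'
  exact (mul_eq_zero.1 hk').resolve_left hk

theorem transpose_mul_apply_eq_zero [Fintype κ] [NoZeroDivisors R] (hU : Uᵀ * U = 1)
    {v : ι → R} (hv : v ≠ 0) {k₀ : ι} (hsupp : ∀ k ≠ k₀, (Uᵀ *ᵥ v) k = 0)
    {X : Matrix ι κ R} (hX : v ᵥ* X = 0) : (Uᵀ * X) k₀ = 0 := by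
  set w := Uᵀ *ᵥ v
  have hw : w = Pi.single k₀ (w k₀) := by
    ext k
    rcases eq_or_ne k k₀ with rfl | hk
    · simp
    · simp [hsupp k hk, hk]
  have hwk₀ : w k₀ ≠ 0 := by
    intro h
    apply hv
    rw [← one_mulVec v, ← mul_eq_one_comm.1 hU, ← mulVec_mulVec]
    change U *ᵥ w = 0
    rw [hw, h, Pi.single_zero, mulVec_zero]
  have hwX : w ᵥ* (Uᵀ * X) = 0 := by
    rw [← vecMul_vecMul, vecMul_transpose, mulVec_mulVec, mul_eq_one_comm.1 hU, one_mulVec, hX]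
  rw [hw, single_vecMul] at hwX
  exact (smul_eq_zero.1 hwX).resolve_left hwk₀

theorem transpose_submatrix_mul_submatrix [DecidableEq κ] (hU : Uᵀ * U = 1) (f : κ ↪ ι) :
    (U.submatrix id f)ᵀ * U.submatrix id f = 1 := by
  rw [transpose_submatrix, ← submatrix_mul _ _ _ id _ Function.bijective_id, hU,
    submatrix_one_embedding]

theorem trace_transpose_submatrix_mul_mul_submatrix [Fintype κ] [DecidableEq κ]
    (hU : Uᵀ * U = 1) (hLU : L * U = U * diagonal lam) (f : κ ↪ ι) :
    ((U.submatrix id f)ᵀ * L * U.submatrix id f).trace = ∑ j, lam (f j) := by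
  rw [transpose_submatrix, ← submatrix_id_id L,
    ← submatrix_mul Uᵀ L f id id Function.bijective_id,
    ← submatrix_mul (Uᵀ * L) U f id f Function.bijective_id, Matrix.mul_assoc, hLU,
    ← Matrix.mul_assoc, hU, Matrix.one_mul, submatrix_diagonal_embedding, trace_diagonal]
  rfl

theorem vecMul_submatrix_eq_zero [NoZeroDivisors R] (hU : Uᵀ * U = 1)
    (hLU : L * U = U * diagonal lam) {v : ι → R} (hv : L *ᵥ v = 0) (f : κ ↪ ι)
    (hf : ∀ j, lam (f j) ≠ 0) : v ᵥ* U.submatrix id f = 0 := by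
  ext j
  rw [Pi.zero_apply, ← transpose_mulVec_apply_eq_zero hU hLU hv (hf j)]
  exact dotProduct_comm _ _

end Eigenbasis

end Matrix

theorem sum_eigenvalues_le_trace {m n : ℕ} (hn : n + 1 ≤ m) {L U : Matrix (Fin m) (Fin m) ℝ}
    {lam : Fin m → ℝ} (hU : Uᵀ * U = 1) (hLU : L * U = U * diagonal lam)
    (hmono : Monotone lam) (hpos : ∀ k : Fin m, (k : ℕ) ≠ 0 → lam k ≠ 0)
    {v : Fin m → ℝ} (hv : v ≠ 0) (hLv : L *ᵥ v = 0) {X : Matrix (Fin m) (Fin n) ℝ}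
    (hX : Xᵀ * X = 1) (hXv : v ᵥ* X = 0) :
    ∑ j : Fin n, lam (Fin.castLE hn j.succ) ≤ (Xᵀ * L * X).trace := by
  rw [trace_transpose_mul_mul_eq_sum hU hLU]
  set A := Uᵀ * X
  have hA : Aᵀ * A = 1 := by
    rw [transpose_mul, transpose_transpose, Matrix.mul_assoc, ← Matrix.mul_assoc U,
      mul_eq_one_comm.1 hU, Matrix.one_mul, hX]
  have hA₀ : ∀ i : Fin m, (i : ℕ) = 0 → (A * Aᵀ) i i = 0 := by
    rintro i hi
    have hrow : A i = 0 := by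
      refine transpose_mul_apply_eq_zero hU hv (fun k hk => ?_) hXv
      exact transpose_mulVec_apply_eq_zero hU hLU hLv
        (hpos k fun h => hk (Fin.ext (h.trans hi.symm)))
    simp [mul_apply, hrow]
  let f : Fin n ↪ Fin m := (Fin.succEmb n).trans (Fin.castLEEmb hn)
  refine (sum_map univ f lam).symm.trans_le ?_
  refine sum_le_sum_mul_of_le_of_le _ _ _ (lam ⟨n, by omega⟩)
    (mul_transpose_self_apply_self_nonneg A) (mul_transpose_self_apply_self_le_one hA)
    (by rw [card_map, card_univ, ← trace_mul_transpose_self hA]; rfl) ?_ ?_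
  · intro i hi
    obtain ⟨j, -, rfl⟩ := mem_map.1 hi
    exact hmono (Fin.le_def.2 j.isLt)
  · -- the weight at `0` vanishes, so a weighted index outside `{1, …, n}` exceeds `n`
    intro i hi hAi
    have hi₀ : (i : ℕ) ≠ 0 := fun h => hAi (hA₀ i h)
    refine hmono (Fin.le_def.2 (not_lt.1 fun hin => hi (mem_map.2 ?_)))
    have hin' : (i : ℕ) < n := hin
    refine ⟨⟨(i : ℕ) - 1, by omega⟩, mem_univ _, Fin.ext ?_⟩
    show (i : ℕ) - 1 + 1 = i
    omega

/-- Main theorem on spectral graph drawing: for a connected weighted graph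
(`0 = λ₁ < λ₂ ≤ ... ≤ λₘ` the eigenvalues of the Laplacian `L`, with
orthonormal eigenvectors `u₁, ..., uₘ`), the minimal energy `tr(Rᵀ L R)` of a
balanced orthogonal drawing `R` in `ℝⁿ` (with `n + 1 ≤ m`) exists and equals
`λ₂ + ⋯ + λ_{n+1}`, and the matrix whose columns are `u₂, ..., u_{n+1}` is a
balanced orthogonal drawing achieving this minimum. -/
theorem stmt_8 {m n : ℕ} (hm : 2 ≤ m) (hn : n + 1 ≤ m)
    (W : Matrix (Fin m) (Fin m) ℝ)
    (L : Matrix (Fin m) (Fin m) ℝ)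
    (hL : L = Matrix.diagonal (fun i => ∑ j, W i j) - W)
    (lam : Fin m → ℝ) (hmono : Monotone lam)
    (u : Fin m → Fin m → ℝ)
    (horth : ∀ i j, u i ⬝ᵥ u j = if i = j then (1 : ℝ) else 0)
    (heig : ∀ i, L *ᵥ u i = lam i • u i)
    (hconn : 0 < lam ⟨1, by omega⟩) :
    IsLeast {E : ℝ | ∃ R : Matrix (Fin m) (Fin n) ℝ,
        Rᵀ * R = 1 ∧ (fun _ => (1 : ℝ)) ᵥ* R = 0 ∧ E = (Rᵀ * L * R).trace}
      (∑ j : Fin n, lam (Fin.castLE hn j.succ)) ∧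
    ((Matrix.of fun (i : Fin m) (j : Fin n) => u (Fin.castLE hn j.succ) i)ᵀ *
        (Matrix.of fun (i : Fin m) (j : Fin n) => u (Fin.castLE hn j.succ) i) = 1 ∧
      (fun _ => (1 : ℝ)) ᵥ*
        (Matrix.of fun (i : Fin m) (j : Fin n) => u (Fin.castLE hn j.succ) i) = 0 ∧
      ((Matrix.of fun (i : Fin m) (j : Fin n) => u (Fin.castLE hn j.succ) i)ᵀ * L *
        (Matrix.of fun (i : Fin m) (j : Fin n) => u (Fin.castLE hn j.succ) i)).trace =
        ∑ j : Fin n, lam (Fin.castLE hn j.succ)) := by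
  set U : Matrix (Fin m) (Fin m) ℝ := (Matrix.of u)ᵀ
  have hU : Uᵀ * U = 1 := by
    ext k l
    exact horth k l
  have hLU : L * U = U * diagonal lam := by
    ext i k
    rw [mul_diagonal]
    exact (congrFun (heig k) i).trans (mul_comm _ _)
  have hones : L *ᵥ (fun _ => 1) = 0 := hL ▸ diagonal_sum_sub_mulVec_one W
  have hpos : ∀ k : Fin m, (k : ℕ) ≠ 0 → lam k ≠ 0 := fun k hk =>
    (hconn.trans_le (hmono (Fin.le_def.2 (Nat.one_le_iff_ne_zero.2 hk)))).ne'
  let f : Fin n ↪ Fin m := (Fin.succEmb n).trans (Fin.castLEEmb hn)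
  have hR : (Matrix.of fun (i : Fin m) (j : Fin n) => u (Fin.castLE hn j.succ) i) =
      U.submatrix id f := rfl
  have horth₀ := transpose_submatrix_mul_submatrix hU f
  have hbal₀ := vecMul_submatrix_eq_zero hU hLU hones f fun j => hpos _ (Nat.succ_ne_zero j)
  have henergy₀ := trace_transpose_submatrix_mul_mul_submatrix hU hLU f
  rw [hR]
  refine ⟨⟨⟨_, horth₀, hbal₀, henergy₀.symm⟩, ?_⟩, horth₀, hbal₀, henergy₀⟩
  rintro _ ⟨R, hRorth, hRbal, rfl⟩
  have hones_ne : (fun _ : Fin m => (1 : ℝ)) ≠ 0 :=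
    Function.ne_iff.2 ⟨⟨0, by omega⟩, one_ne_zero⟩
  exact sum_eigenvalues_le_trace hn hU hLU hmono hpos hones_ne hones hRorth hRbal
end
end

section
/- Let L and D be symmetric N×N real matrices, let X = [X^1 ... X^K] be an N×K real matrix, let α ≠ 0, and suppose Xᵀ D X = α² I_K (in particular (X^j)ᵀ D X^j = α² ≠ 0 for every column). Define μ(X) = Σ_{j=1}^K ((X^j)ᵀ L X^j)/((X^j)ᵀ D X^j). Then for every orthogonal K×K matrix R, the columns of XR also satisfy ((XR)^j)ᵀ D (XR)^j = α² for all j, and μ(XR) = μ(X). -/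
open Matrix

lemma col_quad {N K : ℕ} (M : Matrix (Fin N) (Fin N) ℝ)
    (Y : Matrix (Fin N) (Fin K) ℝ) (j : Fin K) :
    (fun i => Y i j) ⬝ᵥ (M *ᵥ fun i => Y i j) = (Yᵀ * M * Y) j j := by
  simp [Matrix.mul_apply, dotProduct, Matrix.mulVec, Matrix.transpose_apply,
    Finset.mul_sum, Finset.sum_mul, mul_assoc]
  exact Finset.sum_comm

/-- If the columns of `X` satisfy `Xᵀ D X = α² I` (with `α ≠ 0`), then for any
orthogonal `K×K` matrix `R`, the columns of `XR` also satisfy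
`((XR)ʲ)ᵀ D (XR)ʲ = α²` for every `j`, and `μ(XR) = μ(X)` where
`μ(X) = ∑ⱼ ((Xʲ)ᵀ L Xʲ)/((Xʲ)ᵀ D Xʲ)`. -/
theorem stmt_12 {N K : ℕ} (L D : Matrix (Fin N) (Fin N) ℝ)
    (hL : L.IsSymm) (hD : D.IsSymm)
    (X : Matrix (Fin N) (Fin K) ℝ) (α : ℝ) (hα : α ≠ 0)
    (hX : Xᵀ * D * X = α ^ 2 • (1 : Matrix (Fin K) (Fin K) ℝ))
    (R : Matrix (Fin K) (Fin K) ℝ) (hR : Rᵀ * R = 1) :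
    (∀ j : Fin K,
      (fun i => (X * R) i j) ⬝ᵥ (D *ᵥ fun i => (X * R) i j) = α ^ 2) ∧
    (∑ j : Fin K,
        ((fun i => (X * R) i j) ⬝ᵥ (L *ᵥ fun i => (X * R) i j)) /
          ((fun i => (X * R) i j) ⬝ᵥ (D *ᵥ fun i => (X * R) i j))) =
      ∑ j : Fin K,
        ((fun i => X i j) ⬝ᵥ (L *ᵥ fun i => X i j)) /
          ((fun i => X i j) ⬝ᵥ (D *ᵥ fun i => X i j)) := by
  have hRR : R * Rᵀ = 1 := mul_eq_one_comm.mp hR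
  have hXR : (X * R)ᵀ * D * (X * R) = α ^ 2 • (1 : Matrix (Fin K) (Fin K) ℝ) := by
    calc (X * R)ᵀ * D * (X * R) = Rᵀ * (Xᵀ * D * X) * R := by
          simp [Matrix.transpose_mul, Matrix.mul_assoc]
      _ = α ^ 2 • (Rᵀ * R) := by rw [hX]; simp [Matrix.mul_smul, Matrix.smul_mul]
      _ = _ := by rw [hR]
  have hDcol : ∀ j : Fin K,
      (fun i => (X * R) i j) ⬝ᵥ (D *ᵥ fun i => (X * R) i j) = α ^ 2 := by
    intro j
    rw [col_quad, hXR]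
    simp [Matrix.one_apply]
  have hDcol' : ∀ j : Fin K,
      (fun i => X i j) ⬝ᵥ (D *ᵥ fun i => X i j) = α ^ 2 := by
    intro j
    rw [col_quad, hX]
    simp [Matrix.one_apply]
  refine ⟨hDcol, ?_⟩
  have htr : ((X * R)ᵀ * L * (X * R)).trace = (Xᵀ * L * X).trace := by
    calc ((X * R)ᵀ * L * (X * R)).trace
        = (Rᵀ * ((Xᵀ * L * X) * R)).trace := by
          simp [Matrix.transpose_mul, Matrix.mul_assoc]
      _ = ((Xᵀ * L * X) * R * Rᵀ).trace := by
          rw [Matrix.trace_mul_comm, Matrix.mul_assoc]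
      _ = (Xᵀ * L * X).trace := by rw [Matrix.mul_assoc, hRR, Matrix.mul_one]
  calc (∑ j : Fin K,
        ((fun i => (X * R) i j) ⬝ᵥ (L *ᵥ fun i => (X * R) i j)) /
          ((fun i => (X * R) i j) ⬝ᵥ (D *ᵥ fun i => (X * R) i j)))
      = ∑ j : Fin K, ((X * R)ᵀ * L * (X * R)) j j / α ^ 2 := by
        refine Finset.sum_congr rfl fun j _ => ?_
        rw [hDcol j, col_quad]
    _ = ((X * R)ᵀ * L * (X * R)).trace / α ^ 2 := by
        rw [Matrix.trace, ← Finset.sum_div]; rfl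
    _ = (Xᵀ * L * X).trace / α ^ 2 := by rw [htr]
    _ = ∑ j : Fin K, (Xᵀ * L * X) j j / α ^ 2 := by
        rw [Matrix.trace, ← Finset.sum_div]; rfl
    _ = _ := by
        refine Finset.sum_congr rfl fun j _ => ?_
        rw [hDcol' j, col_quad]
end

section
/- Let X and Z be fixed N×K real matrices, and suppose U Σ Vᵀ = Zᵀ X is a singular value decomposition of Zᵀ X (U, V orthogonal K×K matrices, Σ diagonal with nonnegative entries). Then R = U Vᵀ minimizes ‖X - Z R‖_F over all orthogonal K×K matrices R; that is, ‖X - Z(U Vᵀ)‖_F ≤ ‖X - Z R‖_F for every orthogonal K×K matrix R. -/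
open Matrix

/-- For fixed `N×K` real matrices `X` and `Z`, if `U Σ Vᵀ = Zᵀ X` is an SVD of
`Zᵀ X`, then `R = U Vᵀ` minimizes the Frobenius norm `‖X - Z R‖_F`
(with `‖A‖_F = √tr(Aᵀ A)`) over all orthogonal `K×K` matrices `R`. -/
theorem stmt_16 {N K : ℕ} (X Z : Matrix (Fin N) (Fin K) ℝ)
    (U V : Matrix (Fin K) (Fin K) ℝ) (σ : Fin K → ℝ)
    (hσ0 : ∀ i, 0 ≤ σ i)
    (hU : Uᵀ * U = 1) (hV : Vᵀ * V = 1)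
    (hSVD : U * Matrix.diagonal σ * Vᵀ = Zᵀ * X) :
    ∀ R : Matrix (Fin K) (Fin K) ℝ, Rᵀ * R = 1 →
      Real.sqrt (((X - Z * (U * Vᵀ))ᵀ * (X - Z * (U * Vᵀ))).trace) ≤
        Real.sqrt (((X - Z * R)ᵀ * (X - Z * R)).trace) := by
  intro R hR
  apply Real.sqrt_le_sqrt
  have hRR : R * Rᵀ = 1 := mul_eq_one_comm.mp hR
  have hUU : U * Uᵀ = 1 := mul_eq_one_comm.mp hU
  have hVV : V * Vᵀ = 1 := mul_eq_one_comm.mp hV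
  -- Expansion of the squared Frobenius norm for orthogonal S
  have key : ∀ S : Matrix (Fin K) (Fin K) ℝ, S * Sᵀ = 1 →
      ((X - Z * S)ᵀ * (X - Z * S)).trace
        = (Xᵀ * X).trace + (Zᵀ * Z).trace - 2 * (Sᵀ * (Zᵀ * X)).trace := by
    intro S hS
    have h1 : (X - Z * S)ᵀ * (X - Z * S)
        = Xᵀ * X - Xᵀ * (Z * S) - Sᵀ * (Zᵀ * X) + Sᵀ * (Zᵀ * Z) * S := by
      simp only [transpose_sub, transpose_mul, Matrix.sub_mul, Matrix.mul_sub,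
        Matrix.mul_assoc]
      abel
    have h2 : (Sᵀ * (Zᵀ * Z) * S).trace = (Zᵀ * Z).trace := by
      rw [Matrix.trace_mul_comm, ← Matrix.mul_assoc, hS, Matrix.one_mul]
    have h3 : (Xᵀ * (Z * S)).trace = (Sᵀ * (Zᵀ * X)).trace := by
      have : (Sᵀ * (Zᵀ * X)) = (Xᵀ * (Z * S))ᵀ := by
        simp [transpose_mul, Matrix.mul_assoc]
      rw [this, Matrix.trace_transpose]
    rw [h1, Matrix.trace_add, Matrix.trace_sub, Matrix.trace_sub, h2, h3]
    ring
  have hUVo : (U * Vᵀ) * (U * Vᵀ)ᵀ = 1 := by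
    rw [transpose_mul, transpose_transpose, Matrix.mul_assoc,
      ← Matrix.mul_assoc Vᵀ V, hV, Matrix.one_mul, hUU]
  rw [key (U * Vᵀ) hUVo, key R hRR]
  -- reduces to trace comparison
  have hgoal : (Rᵀ * (Zᵀ * X)).trace ≤ ((U * Vᵀ)ᵀ * (Zᵀ * X)).trace := by
    have hL : ((U * Vᵀ)ᵀ * (Zᵀ * X)).trace = ∑ i, σ i := by
      rw [← hSVD]
      have : (U * Vᵀ)ᵀ * (U * Matrix.diagonal σ * Vᵀ)
          = V * Matrix.diagonal σ * Vᵀ := by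
        rw [transpose_mul, transpose_transpose]
        rw [show V * Uᵀ * (U * Matrix.diagonal σ * Vᵀ)
            = V * (Uᵀ * U) * Matrix.diagonal σ * Vᵀ by noncomm_ring, hU]
        simp
      rw [this, Matrix.trace_mul_comm, ← Matrix.mul_assoc, hV]
      simp [Matrix.trace, Matrix.diag]
    set Q : Matrix (Fin K) (Fin K) ℝ := Vᵀ * Rᵀ * U with hQdef
    have hQ : Qᵀ * Q = 1 := by
      have h : (Vᵀ * Rᵀ * U)ᵀ * (Vᵀ * Rᵀ * U) = Uᵀ * (R * (V * Vᵀ) * Rᵀ) * U := by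
        simp only [transpose_mul, transpose_transpose]
        noncomm_ring
      rw [hQdef, h, hVV, Matrix.mul_one, hRR, Matrix.mul_one, hU]
    have hRtr : (Rᵀ * (Zᵀ * X)).trace = ∑ i, σ i * Q i i := by
      rw [← hSVD, show Rᵀ * (U * Matrix.diagonal σ * Vᵀ)
          = Rᵀ * U * Matrix.diagonal σ * Vᵀ by noncomm_ring,
        Matrix.trace_mul_comm, ← Matrix.mul_assoc, ← Matrix.mul_assoc,
        Matrix.trace_mul_comm]
      rw [hQdef]
      simp [Matrix.trace, Matrix.diag, Matrix.diagonal_mul, Matrix.mul_assoc]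
    have hQii : ∀ i, Q i i ≤ 1 := by
      intro i
      have h1 : ∑ j, Q j i ^ 2 = 1 := by
        have := congrFun (congrFun hQ i) i
        simpa [Matrix.mul_apply, Matrix.one_apply, sq] using this
      have h2 : Q i i ^ 2 ≤ 1 := by
        rw [← h1]
        exact Finset.single_le_sum (f := fun j => Q j i ^ 2) (fun j _ => sq_nonneg _) (Finset.mem_univ i)
      nlinarith
    rw [hL, hRtr]
    apply Finset.sum_le_sum
    intro i _
    calc σ i * Q i i ≤ σ i * 1 := mul_le_mul_of_nonneg_left (hQii i) (hσ0 i)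
      _ = σ i := mul_one _
  linarith
end

section
/- Let A be a symmetric n×n real matrix, R an n×m real matrix with Rᵀ R = I_m (m ≤ n), and B = Rᵀ A R. Let λ_1 ≥ ... ≥ λ_n be the eigenvalues of A and μ_1 ≥ ... ≥ μ_m the eigenvalues of B, in decreasing order with multiplicity. Then: (a) λ_{n-m+i} ≤ μ_i ≤ λ_i for i = 1,...,m (the eigenvalues of B interlace those of A); consequently λ_n + ... + λ_{n-m+1} ≤ tr(Rᵀ A R) ≤ λ_1 + ... + λ_m. (b) If λ_i = μ_i for some i, then there is an eigenvector v of B with eigenvalue μ_i such that R v is an eigenvector of A with eigenvalue λ_i. -/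
/-!
Courant–Fischer by a dimension count: the span of `R v₁, …, R vᵢ` (dimension `i`) and the span
of `uᵢ, …, uₙ` (dimension `n - i + 1`) meet in a nonzero vector `R w`. Since `R` is an isometry,
`wᵀ B w = (R w)ᵀ A (R w)` and `‖R w‖ = ‖w‖`, so the Rayleigh quotients give
`μᵢ ≤ wᵀ B w / ‖w‖² ≤ λᵢ`; when `λᵢ = μᵢ` both Rayleigh bounds are attained, which forces `w` and
`R w` into the corresponding eigenspaces. The lower bounds are the upper ones for `-A` with the
orders reversed, and the trace bounds follow from `tr B = ∑ μᵢ`.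
-/

open Matrix Module Submodule

section DotOrthonormal

variable {ι κ : Type*} [Fintype ι] [DecidableEq κ]

def DotOrthonormal (g : κ → ι → ℝ) : Prop :=
  ∀ i j, g i ⬝ᵥ g j = if i = j then 1 else 0

theorem DotOrthonormal.comp {g : κ → ι → ℝ} (hg : DotOrthonormal g) {κ' : Type*}
    [DecidableEq κ'] {f : κ' → κ} (hf : Function.Injective f) : DotOrthonormal (g ∘ f) := by
  intro i j
  simp [Function.comp, hg (f i) (f j), hf.eq_iff]

theorem dotProduct_mulVec_mulVec_of_transpose_mul_self {ι' : Type*} [Fintype ι'] [DecidableEq ι']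
    {R : Matrix ι ι' ℝ} (hR : Rᵀ * R = 1) (a b : ι' → ℝ) :
    (R *ᵥ a) ⬝ᵥ (R *ᵥ b) = a ⬝ᵥ b := by
  rw [dotProduct_mulVec, ← mulVec_transpose, mulVec_mulVec, hR, one_mulVec]

theorem DotOrthonormal.mulVec {ι' : Type*} [Fintype ι'] [DecidableEq ι'] {g : κ → ι' → ℝ}
    (hg : DotOrthonormal g) {R : Matrix ι ι' ℝ} (hR : Rᵀ * R = 1) :
    DotOrthonormal fun k => R *ᵥ g k := by
  intro i j
  rw [dotProduct_mulVec_mulVec_of_transpose_mul_self hR, hg]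

variable [Fintype κ] {g : κ → ι → ℝ}

theorem DotOrthonormal.sum_smul_dotProduct (hg : DotOrthonormal g) (c : κ → ℝ) (j : κ) :
    (∑ k, c k • g k) ⬝ᵥ g j = c j := by
  simp [sum_dotProduct, smul_dotProduct, hg _ j]

theorem DotOrthonormal.sum_smul_dotProduct_sum_smul (hg : DotOrthonormal g) (c d : κ → ℝ) :
    (∑ k, c k • g k) ⬝ᵥ (∑ k, d k • g k) = ∑ k, c k * d k := by
  simp only [dotProduct_sum, dotProduct_smul, hg.sum_smul_dotProduct, smul_eq_mul, mul_comm]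

theorem DotOrthonormal.linearIndependent (hg : DotOrthonormal g) : LinearIndependent ℝ g := by
  refine Fintype.linearIndependent_iff.mpr fun c hc j => ?_
  rw [← hg.sum_smul_dotProduct c j, hc, zero_dotProduct]

end DotOrthonormal

theorem exists_ne_zero_mem_span_range_of_finrank_lt_card_add_card {K V : Type*} [Field K]
    [AddCommGroup V] [Module K V] [FiniteDimensional K V] {ι₁ ι₂ : Type*} [Fintype ι₁]
    [Fintype ι₂] {f : ι₁ → V} {g : ι₂ → V}
    (hf : LinearIndependent K f) (hg : LinearIndependent K g)
    (hcard : finrank K V < Fintype.card ι₁ + Fintype.card ι₂) :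
    ∃ x ≠ 0, x ∈ span K (Set.range f) ∧ x ∈ span K (Set.range g) := by
  by_contra! h
  have hdisj : Disjoint (span K (Set.range f)) (span K (Set.range g)) :=
    disjoint_def.mpr fun x hxf hxg => by_contra fun hx => h x hx hxf hxg
  have := finrank_add_finrank_le_of_disjoint hdisj
  rw [finrank_span_eq_card hf, finrank_span_eq_card hg] at this
  omega

section Rayleigh

variable {ι κ : Type*} [Fintype ι] [Fintype κ]
  {M : Matrix ι ι ℝ} {g : κ → ι → ℝ} {c : κ → ℝ} {t : ℝ} {x : ι → ℝ}

theorem mulVec_sum_smul_of_eigen (hM : ∀ k, M *ᵥ g k = c k • g k) (d : κ → ℝ) :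
    M *ᵥ ∑ k, d k • g k = ∑ k, (c k * d k) • g k := by
  simp only [mulVec_sum, mulVec_smul, hM, smul_smul, mul_comm]

variable [DecidableEq κ]

theorem DotOrthonormal.mul_dotProduct_self_sub_dotProduct_mulVec (hg : DotOrthonormal g)
    (hM : ∀ k, M *ᵥ g k = c k • g k) (d : κ → ℝ) :
    t * ((∑ k, d k • g k) ⬝ᵥ ∑ k, d k • g k) - (∑ k, d k • g k) ⬝ᵥ (M *ᵥ ∑ k, d k • g k) =
      ∑ k, (t - c k) * d k ^ 2 := by
  rw [mulVec_sum_smul_of_eigen hM, hg.sum_smul_dotProduct_sum_smul,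
    hg.sum_smul_dotProduct_sum_smul, Finset.mul_sum, ← Finset.sum_sub_distrib]
  exact Finset.sum_congr rfl fun k _ => by ring

theorem DotOrthonormal.dotProduct_mulVec_le (hg : DotOrthonormal g)
    (hM : ∀ k, M *ᵥ g k = c k • g k) (hc : ∀ k, c k ≤ t) (hx : x ∈ span ℝ (Set.range g)) :
    x ⬝ᵥ (M *ᵥ x) ≤ t * (x ⬝ᵥ x) := by
  obtain ⟨d, rfl⟩ := mem_span_range_iff_exists_fun ℝ |>.mp hx
  have := hg.mul_dotProduct_self_sub_dotProduct_mulVec (t := t) hM d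
  have : 0 ≤ ∑ k, (t - c k) * d k ^ 2 :=
    Finset.sum_nonneg fun k _ => mul_nonneg (sub_nonneg.mpr (hc k)) (sq_nonneg _)
  linarith

theorem DotOrthonormal.mulVec_eq_smul_of_dotProduct_mulVec_eq_of_le (hg : DotOrthonormal g)
    (hM : ∀ k, M *ᵥ g k = c k • g k) (hc : ∀ k, c k ≤ t) (hx : x ∈ span ℝ (Set.range g))
    (heq : x ⬝ᵥ (M *ᵥ x) = t * (x ⬝ᵥ x)) : M *ᵥ x = t • x := by
  obtain ⟨d, rfl⟩ := mem_span_range_iff_exists_fun ℝ |>.mp hx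
  have hsum := hg.mul_dotProduct_self_sub_dotProduct_mulVec (t := t) hM d
  rw [heq, sub_self, eq_comm, Finset.sum_eq_zero_iff_of_nonneg fun k _ =>
    mul_nonneg (sub_nonneg.mpr (hc k)) (sq_nonneg _)] at hsum
  have hcd : ∀ k, c k * d k = t * d k := fun k => by
    rcases mul_eq_zero.mp (hsum k (Finset.mem_univ k)) with h | h
    · rw [sub_eq_zero.mp h]
    · rw [pow_eq_zero_iff two_ne_zero |>.mp h, mul_zero, mul_zero]
  simp only [mulVec_sum_smul_of_eigen hM, hcd, Finset.smul_sum, smul_smul]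

theorem DotOrthonormal.le_dotProduct_mulVec (hg : DotOrthonormal g)
    (hM : ∀ k, M *ᵥ g k = c k • g k) (hc : ∀ k, t ≤ c k) (hx : x ∈ span ℝ (Set.range g)) :
    t * (x ⬝ᵥ x) ≤ x ⬝ᵥ (M *ᵥ x) := by
  have := hg.dotProduct_mulVec_le (M := -M) (c := -c) (t := -t)
    (fun k => by rw [neg_mulVec, hM, Pi.neg_apply, neg_smul]) (fun k => neg_le_neg (hc k)) hx
  rw [neg_mulVec, dotProduct_neg] at this
  linarith

theorem DotOrthonormal.mulVec_eq_smul_of_dotProduct_mulVec_eq_of_ge (hg : DotOrthonormal g)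
    (hM : ∀ k, M *ᵥ g k = c k • g k) (hc : ∀ k, t ≤ c k) (hx : x ∈ span ℝ (Set.range g))
    (heq : x ⬝ᵥ (M *ᵥ x) = t * (x ⬝ᵥ x)) : M *ᵥ x = t • x := by
  have := hg.mulVec_eq_smul_of_dotProduct_mulVec_eq_of_le (M := -M) (c := -c) (t := -t)
    (fun k => by rw [neg_mulVec, hM, Pi.neg_apply, neg_smul]) (fun k => neg_le_neg (hc k)) hx
    (by rw [neg_mulVec, dotProduct_neg, heq, neg_mul])
  rwa [neg_mulVec, neg_smul, neg_inj] at this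

end Rayleigh

theorem trace_eq_sum_of_eigen {ι : Type*} [Fintype ι] [DecidableEq ι] {B : Matrix ι ι ℝ}
    {mu : ι → ℝ} {v : ι → ι → ℝ} (hv : DotOrthonormal v) (hve : ∀ i, B *ᵥ v i = mu i • v i) :
    B.trace = ∑ i, mu i := by
  set V : Matrix ι ι ℝ := Matrix.of v
  have hVVt : V * Vᵀ = 1 := by
    ext a b
    simpa [V, mul_apply, one_apply, dotProduct] using hv a b
  have hBVt : B * Vᵀ = Vᵀ * diagonal mu := by
    ext a b
    rw [mul_diagonal]
    simpa [V, mul_apply, mulVec, dotProduct, mul_comm] using congrFun (hve b) a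
  calc B.trace = (B * Vᵀ * V).trace := by rw [Matrix.mul_assoc, mul_eq_one_comm.mp hVVt, mul_one]
    _ = (V * Vᵀ * diagonal mu).trace := by rw [hBVt, trace_mul_comm, Matrix.mul_assoc]
    _ = ∑ i, mu i := by rw [hVVt, Matrix.one_mul, trace_diagonal]

section Interlacing

variable {n m : ℕ} {A : Matrix (Fin n) (Fin n) ℝ} {R : Matrix (Fin n) (Fin m) ℝ}
  {lam : Fin n → ℝ} {u : Fin n → Fin n → ℝ} {mu : Fin m → ℝ} {v : Fin m → Fin m → ℝ}

theorem exists_ne_zero_mem_span_Iic_mulVec_mem_span_Ici (hmn : m ≤ n) (hR : Rᵀ * R = 1)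
    (hu : DotOrthonormal u) (hv : DotOrthonormal v) (i : Fin m) :
    ∃ w ≠ 0, w ∈ span ℝ (Set.range fun j : {j // j ≤ i} => v j) ∧
      R *ᵥ w ∈ span ℝ (Set.range fun k : {k // Fin.castLE hmn i ≤ k} => u k) := by
  have hcard : finrank ℝ (Fin n → ℝ) <
      Fintype.card {j // j ≤ i} + Fintype.card {k // Fin.castLE hmn i ≤ k} := by
    simp only [finrank_fin_fun, Fintype.card_subtype, Finset.filter_ge_eq_Iic,
      Finset.filter_le_eq_Ici, Fin.card_Iic, Fin.card_Ici, Fin.val_castLE]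
    omega
  obtain ⟨x, hx0, hxv, hxu⟩ := exists_ne_zero_mem_span_range_of_finrank_lt_card_add_card
    ((hv.comp Subtype.val_injective).mulVec hR).linearIndependent
    (hu.comp Subtype.val_injective).linearIndependent hcard
  have hxv' : x ∈ (span ℝ (Set.range fun j : {j // j ≤ i} => v j)).map R.mulVecLin := by
    rwa [← span_image, ← Set.range_comp]
  obtain ⟨w, hw, rfl⟩ := mem_map.mp hxv'
  exact ⟨w, fun h => hx0 (by rw [mulVecLin_apply, h, mulVec_zero]), hw, hxu⟩

theorem eigenvalue_compression_le_and_exists_common_eigenvector (hmn : m ≤ n)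
    (hR : Rᵀ * R = 1)
    (hu : DotOrthonormal u) (hue : ∀ k, A *ᵥ u k = lam k • u k) (hlam : Antitone lam)
    (hv : DotOrthonormal v) (hve : ∀ j, (Rᵀ * A * R) *ᵥ v j = mu j • v j) (hmu : Antitone mu)
    (i : Fin m) :
    mu i ≤ lam (Fin.castLE hmn i) ∧
      (lam (Fin.castLE hmn i) = mu i → ∃ w : Fin m → ℝ, w ≠ 0 ∧
        (Rᵀ * A * R) *ᵥ w = mu i • w ∧ R *ᵥ w ≠ 0 ∧
        A *ᵥ (R *ᵥ w) = lam (Fin.castLE hmn i) • (R *ᵥ w)) := by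
  obtain ⟨w, hw0, hwv, hwu⟩ := exists_ne_zero_mem_span_Iic_mulVec_mem_span_Ici hmn hR hu hv i
  have hv' := hv.comp (Subtype.val_injective (p := (· ≤ i)))
  have hu' := hu.comp (Subtype.val_injective (p := (Fin.castLE hmn i ≤ ·)))
  have hmu' : ∀ j : {j // j ≤ i}, mu i ≤ mu j := fun j => hmu j.2
  have hlam' : ∀ k : {k // Fin.castLE hmn i ≤ k}, lam k ≤ lam (Fin.castLE hmn i) :=
    fun k => hlam k.2
  have hnorm : (R *ᵥ w) ⬝ᵥ (R *ᵥ w) = w ⬝ᵥ w :=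
    dotProduct_mulVec_mulVec_of_transpose_mul_self hR w w
  have hquad : w ⬝ᵥ ((Rᵀ * A * R) *ᵥ w) = (R *ᵥ w) ⬝ᵥ (A *ᵥ (R *ᵥ w)) := by
    rw [← mulVec_mulVec, ← mulVec_mulVec, dotProduct_mulVec, vecMul_transpose]
  have hB := hv'.le_dotProduct_mulVec (fun j => hve j) hmu' hwv
  have hA := hu'.dotProduct_mulVec_le (fun k => hue k) hlam' hwu
  rw [hnorm] at hA
  have hpos : 0 < w ⬝ᵥ w := by simpa using dotProduct_star_self_pos_iff.mpr hw0
  refine ⟨le_of_mul_le_mul_right (by linarith) hpos, fun heq => ⟨w, hw0, ?_, ?_, ?_⟩⟩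
  · exact hv'.mulVec_eq_smul_of_dotProduct_mulVec_eq_of_ge (fun j => hve j) hmu' hwv
      (by rw [heq] at hA; linarith)
  · exact fun h => hpos.ne' (by rw [← hnorm, h, zero_dotProduct])
  · exact hu'.mulVec_eq_smul_of_dotProduct_mulVec_eq_of_le (fun k => hue k) hlam' hwu
      (by rw [hnorm]; rw [← heq] at hB; linarith)

theorem le_eigenvalue_compression (hmn : m ≤ n) (hR : Rᵀ * R = 1)
    (hu : DotOrthonormal u) (hue : ∀ k, A *ᵥ u k = lam k • u k) (hlam : Antitone lam)
    (hv : DotOrthonormal v) (hve : ∀ j, (Rᵀ * A * R) *ᵥ v j = mu j • v j) (hmu : Antitone mu)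
    (i : Fin m) :
    lam ⟨n - m + i, (Nat.add_lt_add_left i.2 _).trans_eq (Nat.sub_add_cancel hmn)⟩ ≤ mu i := by
  have := (eigenvalue_compression_le_and_exists_common_eigenvector (A := -A)
    (lam := fun k => -lam k.rev) (mu := fun j => -mu j.rev) hmn hR (hu.comp Fin.rev_injective)
    (fun k => by simp [neg_mulVec, hue]) (hlam.comp Fin.rev_anti).neg
    (hv.comp Fin.rev_injective) (fun j => by simp [neg_mulVec, hve])
    (hmu.comp Fin.rev_anti).neg i.rev).1
  have hidx : (Fin.castLE hmn i.rev).rev = ⟨n - m + i, by omega⟩ := by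
    ext
    simp only [Fin.val_rev, Fin.val_castLE]
    omega
  simpa [hidx] using this

end Interlacing

/-- (Eigenvalue interlacing) Let `A` be symmetric `n×n`, `R` an `n×m` matrix
with `Rᵀ R = I` (`m ≤ n`), and `B = Rᵀ A R`, with eigenvalues
`λ₁ ≥ ... ≥ λₙ` of `A` and `μ₁ ≥ ... ≥ μₘ` of `B` (0-based indexing in the
formal statement). Then (a) `λ_{n-m+i} ≤ μᵢ ≤ λᵢ` for all `i`, whence
`λₙ + ... + λ_{n-m+1} ≤ tr(Rᵀ A R) ≤ λ₁ + ... + λₘ`; and (b) if `λᵢ = μᵢ`,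
then there is an eigenvector `w` of `B` for `μᵢ` such that `R w` is an
eigenvector of `A` for `λᵢ`. -/
theorem stmt_18 {n m : ℕ} (hmn : m ≤ n)
    (A : Matrix (Fin n) (Fin n) ℝ)
    (R : Matrix (Fin n) (Fin m) ℝ) (hR : Rᵀ * R = 1)
    (lam : Fin n → ℝ) (hlam : Antitone lam)
    (u : Fin n → Fin n → ℝ)
    (huo : ∀ i j, u i ⬝ᵥ u j = if i = j then (1 : ℝ) else 0)
    (hue : ∀ i, A *ᵥ u i = lam i • u i)
    (mu : Fin m → ℝ) (hmu : Antitone mu)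
    (v : Fin m → Fin m → ℝ)
    (hvo : ∀ i j, v i ⬝ᵥ v j = if i = j then (1 : ℝ) else 0)
    (hve : ∀ i, (Rᵀ * A * R) *ᵥ v i = mu i • v i) :
    (∀ i : Fin m,
      lam ⟨n - m + (i : ℕ), by omega⟩ ≤ mu i ∧
      mu i ≤ lam ⟨(i : ℕ), by omega⟩) ∧
    (∑ i : Fin m, lam ⟨n - m + (i : ℕ), by omega⟩) ≤ (Rᵀ * A * R).trace ∧
    (Rᵀ * A * R).trace ≤ ∑ i : Fin m, lam ⟨(i : ℕ), by omega⟩ ∧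
    (∀ i : Fin m, lam ⟨(i : ℕ), by omega⟩ = mu i →
      ∃ w : Fin m → ℝ, w ≠ 0 ∧ (Rᵀ * A * R) *ᵥ w = mu i • w ∧
        R *ᵥ w ≠ 0 ∧
        A *ᵥ (R *ᵥ w) = lam ⟨(i : ℕ), by omega⟩ • (R *ᵥ w)) := by
  have hupper :=
    eigenvalue_compression_le_and_exists_common_eigenvector hmn hR huo hue hlam hvo hve hmu
  have hlower := le_eigenvalue_compression hmn hR huo hue hlam hvo hve hmu
  have htrace := trace_eq_sum_of_eigen hvo hve
  refine ⟨fun i => ⟨hlower i, (hupper i).1⟩, ?_, ?_, fun i => (hupper i).2⟩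
  · rw [htrace]
    exact Finset.sum_le_sum fun i _ => hlower i
  · rw [htrace]
    exact Finset.sum_le_sum fun i _ => (hupper i).1
end
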